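/- arXiv:1710.09622 — 12 statements merged into one kernel-verified Lean document; each statement's English description precedes it below -/
import Mathlib

section
/- For every (a₁,a₂,a₃,a₄) ∈ ℕ⁴ with a₃ ≤ a₁: if 2a₂ ≥ 2a₄+a₃−a₁ then R(a₁,a₂,a₃,a₄) = (a₂, a₃, a₄, a₁+2a₂−2a₄); if a₄+a₃−a₁ ≤ a₂ and 2a₂ ≤ 2a₄+a₃−a₁ then R(a₁,a₂,a₃,a₄) = (a₂, 2a₃+2a₄−a₁−2a₂, a₁+2a₂−(a₃+a₄), a₃); and if a₂ ≤ a₄+a₃−a₁ then R(a₁,a₂,a₃,a₄) = (a₄+a₃−a₁, a₁, a₂, a₃). -/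
abbrev V4 : Type := ℤ × ℤ × ℤ × ℤ

def NN : V4 → Prop
  | (a, b, c, d) => 0 ≤ a ∧ 0 ≤ b ∧ 0 ≤ c ∧ 0 ≤ d

def Rm : V4 → V4
  | (a, b, c, d) =>
    let n1 := max b (max b d + c - a)
    let n2 := max a c + 2*b
    let n3 := min (c + d) (a + min b d)
    let n4 := min a c
    let m := max (2*n3) (n2 + n4)
    (n1, m - n2, n2 + n3 - m, n4 - 2*n3 + m)

def Sm : V4 → V4
  | (a, b, c, d) =>
    let p1 := max b (max b d + 2*(c - a))
    let p2 := max a c + b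
    let p3 := min (2*c + d) (2*a + min b d)
    let p4 := min a c
    let v := max p3 (p2 + p4)
    (p1, v - p2, 2*p2 + p3 - 2*v, p4 - p3 + v)

abbrev M : Type := V4 × V4

def eps1 (m : M) : ℤ := m.1.1
def eps2 (m : M) : ℤ := m.2.1
def phi1 (l1 : ℤ) (m : M) : ℤ :=
  m.1.1 + l1 - 2*(m.2.2.1 + 2*m.2.2.2.1 + m.2.2.2.2) + 2*(m.2.1 + m.2.2.1 + m.2.2.2.1)
def phi2 (l2 : ℤ) (m : M) : ℤ :=
  m.2.1 + l2 + (m.2.2.1 + 2*m.2.2.2.1 + m.2.2.2.2) - 2*(m.2.1 + m.2.2.1 + m.2.2.2.1)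

def e1m (m : M) : Option M :=
  if 0 < m.1.1 then
    some ((m.1.1 - 1, m.1.2.1, m.1.2.2.1, m.1.2.2.2),
          Rm (m.1.1 - 1, m.1.2.1, m.1.2.2.1, m.1.2.2.2))
  else none

def e2m (m : M) : Option M :=
  if 0 < m.2.1 then
    some (Sm (m.2.1 - 1, m.2.2.1, m.2.2.2.1, m.2.2.2.2),
          (m.2.1 - 1, m.2.2.1, m.2.2.2.1, m.2.2.2.2))
  else none

def f1m (l1 : ℤ) (m : M) : Option M :=
  if 0 < phi1 l1 m then
    some ((m.1.1 + 1, m.1.2.1, m.1.2.2.1, m.1.2.2.2),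
          Rm (m.1.1 + 1, m.1.2.1, m.1.2.2.1, m.1.2.2.2))
  else none

def f2m (l2 : ℤ) (m : M) : Option M :=
  if 0 < phi2 l2 m then
    some (Sm (m.2.1 + 1, m.2.2.1, m.2.2.2.1, m.2.2.2.2),
          (m.2.1 + 1, m.2.2.1, m.2.2.2.1, m.2.2.2.2))
  else none

def Bset (l1 l2 : ℤ) : Set M :=
  {m | NN m.1 ∧ NN m.2 ∧ Rm m.1 = m.2 ∧ m.2.2.2.1 ≤ l1 ∧ m.1.2.2.1 ≤ l2}

def chainM (ops : List (M → Option M)) (x : M) : Option M :=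
  ops.foldr (fun g o => o.bind g) (some x)

theorem stmt_3 (a1 a2 a3 a4 : ℤ) (h : NN (a1, a2, a3, a4)) (hle : a3 ≤ a1) :
    (2*a2 ≥ 2*a4 + a3 - a1 →
      Rm (a1, a2, a3, a4) = (a2, a3, a4, a1 + 2*a2 - 2*a4)) ∧
    (a4 + a3 - a1 ≤ a2 → 2*a2 ≤ 2*a4 + a3 - a1 →
      Rm (a1, a2, a3, a4) =
        (a2, 2*a3 + 2*a4 - a1 - 2*a2, a1 + 2*a2 - (a3 + a4), a3)) ∧
    (a2 ≤ a4 + a3 - a1 →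
      Rm (a1, a2, a3, a4) = (a4 + a3 - a1, a1, a2, a3)) := by
  obtain ⟨h1, h2, h3, h4⟩ := h
  simp only [Rm, Prod.mk.injEq]
  refine ⟨fun hc => ?_, fun hc hc' => ?_, fun hc => ?_⟩ <;> omega
end

section
/- For every (x₁,x₂,x₃,x₄) ∈ ℕ⁴ with x₃ ≤ x₁: if x₂ ≥ x₄+x₃−x₁ then S(x₁,x₂,x₃,x₄) = (x₂, x₃, x₄, x₁+x₂−x₄); if x₄+2(x₃−x₁) ≤ x₂ ≤ x₄+x₃−x₁ then S(x₁,x₂,x₃,x₄) = (x₂, 2x₃+x₄−x₁−x₂, 2x₁+2x₂−2x₃−x₄, x₃); and if x₂ ≤ x₄+2(x₃−x₁) then S(x₁,x₂,x₃,x₄) = (x₄+2(x₃−x₁), x₁, x₂, x₃). -/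
theorem stmt_4 (x1 x2 x3 x4 : ℤ) (h : NN (x1, x2, x3, x4)) (hle : x3 ≤ x1) :
    (x4 + x3 - x1 ≤ x2 →
      Sm (x1, x2, x3, x4) = (x2, x3, x4, x1 + x2 - x4)) ∧
    (x4 + 2*(x3 - x1) ≤ x2 → x2 ≤ x4 + x3 - x1 →
      Sm (x1, x2, x3, x4) =
        (x2, 2*x3 + x4 - x1 - x2, 2*x1 + 2*x2 - 2*x3 - x4, x3)) ∧
    (x2 ≤ x4 + 2*(x3 - x1) →
      Sm (x1, x2, x3, x4) = (x4 + 2*(x3 - x1), x1, x2, x3)) := by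
  obtain ⟨h1,h2,h3,h4⟩ := h
  refine ⟨?_, ?_, ?_⟩ <;> intros <;>
  · simp only [Sm, Prod.mk.injEq]
    refine ⟨?_, ?_, ?_, ?_⟩ <;> (simp only [max_def, min_def]; split_ifs <;> omega)
end

section
/- Let λ ∈ ℕ² and m = ((a₁,a₂,a₃,a₄),(x₁,x₂,x₃,x₄)) ∈ B(λ). If a₃ ≥ a₁ ≥ 1 and x₁ ≥ 1, then Δ^e_ε(2,1,m) = max(0, 2+a₁−a₃+2a₂−2·max(a₂,a₄)). -/
theorem stmt_5 (l1 l2 : ℕ) (a1 a2 a3 a4 x1 x2 x3 x4 : ℤ)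
    (hm : (((a1, a2, a3, a4), (x1, x2, x3, x4)) : M) ∈ Bset (l1 : ℤ) (l2 : ℤ))
    (ha1 : 1 ≤ a1) (ha3 : a1 ≤ a3) (hx1 : 1 ≤ x1) :
    ∃ m' : M, e2m ((a1, a2, a3, a4), (x1, x2, x3, x4)) = some m' ∧
      eps1 m' - eps1 ((a1, a2, a3, a4), (x1, x2, x3, x4)) =
        max 0 (2 + a1 - a3 + 2*a2 - 2*max a2 a4) := by
  obtain ⟨hN1, hN2, hR, -, -⟩ := hm
  obtain ⟨h1, h2, h3, h4⟩ := hN1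
  obtain ⟨h5, h6, h7, h8⟩ := hN2
  simp only [Rm, Prod.mk.injEq] at hR
  obtain ⟨e1, e2, e3, e4⟩ := hR
  have hx : (0:ℤ) < x1 := by linarith
  refine ⟨(Sm (x1 - 1, x2, x3, x4), (x1 - 1, x2, x3, x4)), ?_, ?_⟩
  · simp [e2m, hx]
  · simp only [eps1, Sm]
    omega
end

section
/- Let λ ∈ ℕ² and m = ((a₁,a₂,a₃,a₄),(x₁,x₂,x₃,x₄)) ∈ B(λ). If x₃ ≥ x₁ ≥ 1 and a₁ ≥ 1, then Δ^e_ε(1,2,m) = max(0, 1+x₁−x₃+x₂−max(x₂,x₄)). -/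
theorem stmt_6 (l1 l2 : ℕ) (a1 a2 a3 a4 x1 x2 x3 x4 : ℤ)
    (hm : (((a1, a2, a3, a4), (x1, x2, x3, x4)) : M) ∈ Bset (l1 : ℤ) (l2 : ℤ))
    (hx1 : 1 ≤ x1) (hx3 : x1 ≤ x3) (ha1 : 1 ≤ a1) :
    ∃ m' : M, e1m ((a1, a2, a3, a4), (x1, x2, x3, x4)) = some m' ∧
      eps2 m' - eps2 ((a1, a2, a3, a4), (x1, x2, x3, x4)) =
        max 0 (1 + x1 - x3 + x2 - max x2 x4) := by
  obtain ⟨hNa, hNx, hR, hl1, hl2⟩ := hm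
  simp only [Rm, Prod.mk.injEq] at hR
  obtain ⟨h1, h2, h3, h4⟩ := hR
  refine ⟨((a1 - 1, a2, a3, a4), Rm (a1 - 1, a2, a3, a4)), ?_, ?_⟩
  · simp only [e1m]
    rw [if_pos (show (0:ℤ) < a1 by omega)]
  · simp only [NN] at hNa hNx
    simp only [eps2, Rm]
    omega
end

section
/- Let λ ∈ ℕ² and m = ((a₁,a₂,a₃,a₄),(x₁,x₂,x₃,x₄)) ∈ B(λ). If a₁ > a₃ and x₁ > x₃, then Δ^e_ε(1,2,m) · Δ^e_ε(2,1,m) = 0, i.e. at least one of Δ^e_ε(1,2,m) and Δ^e_ε(2,1,m) vanishes. -/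
theorem stmt_7 (l1 l2 : ℕ) (a1 a2 a3 a4 x1 x2 x3 x4 : ℤ)
    (hm : (((a1, a2, a3, a4), (x1, x2, x3, x4)) : M) ∈ Bset (l1 : ℤ) (l2 : ℤ))
    (ha : a3 < a1) (hx : x3 < x1) :
    ∃ m1 m2 : M, e1m ((a1, a2, a3, a4), (x1, x2, x3, x4)) = some m1 ∧
      e2m ((a1, a2, a3, a4), (x1, x2, x3, x4)) = some m2 ∧
      (eps2 m1 - eps2 ((a1, a2, a3, a4), (x1, x2, x3, x4))) *
        (eps1 m2 - eps1 ((a1, a2, a3, a4), (x1, x2, x3, x4))) = 0 := by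
  
  obtain ⟨⟨ha1,ha2,ha3,ha4⟩, ⟨hx1,hx2,hx3,hx4⟩, hR, -, -⟩ := hm
  simp only [Rm, Prod.mk.injEq] at hR
  obtain ⟨e1, e2, e3, e4⟩ := hR
  have h1 : (0:ℤ) < a1 := by omega
  have h2 : (0:ℤ) < x1 := by omega
  refine ⟨((a1-1,a2,a3,a4), Rm (a1-1,a2,a3,a4)),
      (Sm (x1-1,x2,x3,x4), (x1-1,x2,x3,x4)), ?_, ?_, ?_⟩
  · simp [e1m, h1]
  · simp [e2m, h2]
  · simp only [eps1, eps2, Rm, Sm]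
    rcases show (max a2 (max a2 a4 + a3 - (a1-1)) - x1 = 0) ∨
        (max x2 (max x2 x4 + 2*(x3 - (x1-1))) - a1 = 0) from by omega with h | h
    · rw [h, zero_mul]
    · rw [h, mul_zero]
end

section
/- Let λ ∈ ℕ². The set {m ∈ B(λ) : ε₁(m) > 0, ε₂(m) > 0, (Δ^e_ε(1,2,m), Δ^e_ε(2,1,m)) = (1,2)} equals the disjoint union (X₁ ⊔ X₂ ⊔ X₃) ∩ B(λ), where X₁ = {((a,b,a,b),(b,a,b,a)) : a,b ≥ 1}, X₂ = {((a,b,a,c),(b,a,c,a+2b−2c)) : a ≥ 1, 0 ≤ c < b}, and X₃ = {((a,b,c,a+b−c),(b,a,b,c)) : b ≥ 1, 0 ≤ c < a}. -/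
def SX1 : Set M := {m | ∃ a b : ℤ, 1 ≤ a ∧ 1 ≤ b ∧ m = ((a, b, a, b), (b, a, b, a))}

def SX2 : Set M :=
  {m | ∃ a b c : ℤ, 1 ≤ a ∧ 0 ≤ c ∧ c < b ∧
    m = ((a, b, a, c), (b, a, c, a + 2*b - 2*c))}

def SX3 : Set M :=
  {m | ∃ a b c : ℤ, 1 ≤ b ∧ 0 ≤ c ∧ c < a ∧
    m = ((a, b, c, a + b - c), (b, a, b, c))}

lemma mem_SX1_iff (a b c d x1 x2 x3 x4 : ℤ) :
    (((a,b,c,d),(x1,x2,x3,x4)) : M) ∈ SX1 ↔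
      1 ≤ a ∧ 1 ≤ b ∧ c = a ∧ d = b ∧ x1 = b ∧ x2 = a ∧ x3 = b ∧ x4 = a := by
  simp only [SX1, Set.mem_setOf_eq, Prod.mk.injEq]
  constructor
  · rintro ⟨a', b', h1, h2, ⟨rfl, rfl, rfl, rfl⟩, rfl, rfl, rfl, rfl⟩
    omega
  · rintro ⟨h1, h2, rfl, rfl, rfl, rfl, rfl, rfl⟩
    exact ⟨_, _, h1, h2, ⟨rfl, rfl, rfl, rfl⟩, rfl, rfl, rfl, rfl⟩

lemma mem_SX2_iff (a b c d x1 x2 x3 x4 : ℤ) :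
    (((a,b,c,d),(x1,x2,x3,x4)) : M) ∈ SX2 ↔
      1 ≤ a ∧ 0 ≤ d ∧ d < b ∧ c = a ∧ x1 = b ∧ x2 = a ∧ x3 = d ∧ x4 = a + 2*b - 2*d := by
  simp only [SX2, Set.mem_setOf_eq, Prod.mk.injEq]
  constructor
  · rintro ⟨a', b', c', h1, h2, h3, ⟨rfl, rfl, rfl, rfl⟩, rfl, rfl, rfl, rfl⟩
    omega
  · rintro ⟨h1, h2, h3, rfl, rfl, rfl, rfl, rfl⟩
    exact ⟨_, _, _, h1, h2, h3, ⟨rfl, rfl, rfl, rfl⟩, rfl, rfl, rfl, rfl⟩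

lemma mem_SX3_iff (a b c d x1 x2 x3 x4 : ℤ) :
    (((a,b,c,d),(x1,x2,x3,x4)) : M) ∈ SX3 ↔
      1 ≤ b ∧ 0 ≤ c ∧ c < a ∧ d = a + b - c ∧ x1 = b ∧ x2 = a ∧ x3 = b ∧ x4 = c := by
  simp only [SX3, Set.mem_setOf_eq, Prod.mk.injEq]
  constructor
  · rintro ⟨a', b', c', h1, h2, h3, ⟨rfl, rfl, rfl, rfl⟩, rfl, rfl, rfl, rfl⟩
    omega
  · rintro ⟨h1, h2, h3, rfl, rfl, rfl, rfl, rfl⟩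
    exact ⟨_, _, _, h1, h2, h3, ⟨rfl, rfl, rfl, rfl⟩, rfl, rfl, rfl, rfl⟩

theorem stmt_8 (l1 l2 : ℕ) :
    {m : M | m ∈ Bset (l1 : ℤ) (l2 : ℤ) ∧ 0 < eps1 m ∧ 0 < eps2 m ∧
        (∃ m1, e1m m = some m1 ∧ eps2 m1 = eps2 m + 1) ∧
        (∃ m2, e2m m = some m2 ∧ eps1 m2 = eps1 m + 2)} =
      (SX1 ∪ SX2 ∪ SX3) ∩ Bset (l1 : ℤ) (l2 : ℤ) ∧
    Disjoint SX1 SX2 ∧ Disjoint SX1 SX3 ∧ Disjoint SX2 SX3 := by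
  refine ⟨?_, ?_, ?_, ?_⟩
  · ext ⟨⟨a, b, c, d⟩, x1, x2, x3, x4⟩
    simp only [Set.mem_setOf_eq, Set.mem_inter_iff, Set.mem_union,
      mem_SX1_iff, mem_SX2_iff, mem_SX3_iff, Bset, NN, eps1, eps2, e1m, e2m, Rm, Sm,
      Prod.mk.injEq, Option.ite_none_right_eq_some, Option.some.injEq,
      and_assoc, exists_and_left, exists_eq_left', exists_eq_left]
    omega
  · rw [Set.disjoint_left]
    rintro m ⟨a, b, h1, h2, rfl⟩ ⟨a', b', c', g1, g2, g3, hm⟩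
    simp only [Prod.mk.injEq] at hm; omega
  · rw [Set.disjoint_left]
    rintro m ⟨a, b, h1, h2, rfl⟩ ⟨a', b', c', g1, g2, g3, hm⟩
    simp only [Prod.mk.injEq] at hm; omega
  · rw [Set.disjoint_left]
    rintro m ⟨a, b, c, h1, h2, h3, rfl⟩ ⟨a', b', c', g1, g2, g3, hm⟩
    simp only [Prod.mk.injEq] at hm; omega
end

section
/- Let λ ∈ ℕ². The set {m ∈ B(λ) : ε₁(m) ≥ 2, ε₂(m) > 0, (Δ^e_ε(1,2,m), Δ^e_ε(2,1,m)) = (1,1)} equals {((a,b,a+1,c),(b+1,a,c,a+2b−2c+1)) : a ≥ 2, 0 ≤ c ≤ b} ∩ B(λ). -/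
set_option maxHeartbeats 1000000 in
theorem stmt_9 (l1 l2 : ℕ) :
    {m : M | m ∈ Bset (l1 : ℤ) (l2 : ℤ) ∧ 2 ≤ eps1 m ∧ 0 < eps2 m ∧
        (∃ m1, e1m m = some m1 ∧ eps2 m1 = eps2 m + 1) ∧
        (∃ m2, e2m m = some m2 ∧ eps1 m2 = eps1 m + 1)} =
      {m : M | ∃ a b c : ℤ, 2 ≤ a ∧ 0 ≤ c ∧ c ≤ b ∧
          m = ((a, b, a + 1, c), (b + 1, a, c, a + 2*b - 2*c + 1))} ∩
        Bset (l1 : ℤ) (l2 : ℤ) := by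
  ext m
  obtain ⟨⟨a, b, c, d⟩, x1, x2, x3, x4⟩ := m
  simp only [Set.mem_setOf_eq, Set.mem_inter_iff, Bset, NN, Rm, Sm, eps1, eps2, e1m, e2m,
    Prod.mk.injEq]
  constructor
  · rintro ⟨⟨⟨ha0, hb0, hc0, hd0⟩, ⟨hx10, hx20, hx30, hx40⟩, hR, hl1, hl2⟩, ha, hx1,
      ⟨m1, he1, heps1⟩, ⟨m2, he2, heps2⟩⟩
    rw [if_pos (by omega : (0:ℤ) < a)] at he1
    rw [if_pos hx1] at he2
    obtain rfl := Option.some.injEq _ _ |>.mp he1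
    obtain rfl := Option.some.injEq _ _ |>.mp he2
    clear he1 he2
    simp only [eps2, eps1, Rm, Sm] at heps1 heps2
    refine ⟨⟨a, b, d, ?_, ?_, ?_, ⟨?_, ?_, ?_, ?_⟩, ?_, ?_, ?_, ?_⟩,
      ⟨⟨ha0, hb0, hc0, hd0⟩, ⟨hx10, hx20, hx30, hx40⟩, hR, hl1, hl2⟩⟩ <;> omega
  · rintro ⟨⟨a', b', c', ha', hc', hcb, ⟨rfl, rfl, rfl, rfl⟩, rfl, rfl, rfl, rfl⟩, hN1, hN2, hR, hl1, hl2⟩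
    refine ⟨⟨hN1, hN2, ?_, hl1, hl2⟩, by omega, by omega,
      ⟨_, by rw [if_pos (by omega : (0:ℤ) < x2)], ?_⟩,
      ⟨_, by rw [if_pos (by omega : (0:ℤ) < b + 1)], ?_⟩⟩
    · exact hR
    · dsimp only; omega
    · dsimp only; omega
end

section
/- Let λ ∈ ℕ². The set {m ∈ B(λ) : ε₁(m) ≥ 2, ε₂(m) > 0, ε₂(ẽ₁²m) > 0, Δ^e_ε(2,1,ẽ₁²m) = 0, (Δ^e_ε(1,2,m), Δ^e_ε(2,1,m)) = (0,2)} equals {((a,b,c,a+b−c−1),(b,a−2,b+1,c)) : a ≥ 2, b ≥ 1, 0 ≤ c ≤ a−2} ∩ B(λ). -/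
lemma e1m_pos (m : M) (h : 0 < m.1.1) :
    e1m m = some ((m.1.1 - 1, m.1.2.1, m.1.2.2.1, m.1.2.2.2),
      Rm (m.1.1 - 1, m.1.2.1, m.1.2.2.1, m.1.2.2.2)) := if_pos h

lemma e2m_pos (m : M) (h : 0 < m.2.1) :
    e2m m = some (Sm (m.2.1 - 1, m.2.2.1, m.2.2.2.1, m.2.2.2.2),
      (m.2.1 - 1, m.2.2.1, m.2.2.2.1, m.2.2.2.2)) := if_pos h

lemma chain2_pos (m : M) (h : 0 < m.1.1) (h2 : 0 < m.1.1 - 1) :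
    chainM [e1m, e1m] m = some ((m.1.1 - 1 - 1, m.1.2.1, m.1.2.2.1, m.1.2.2.2),
      Rm (m.1.1 - 1 - 1, m.1.2.1, m.1.2.2.1, m.1.2.2.2)) := by
  rw [show chainM [e1m, e1m] m = ((some m).bind e1m).bind e1m from rfl,
    Option.bind_some, e1m_pos m h, Option.bind_some, e1m_pos _ h2]

lemma L1 (a b c d x1 : ℤ) (h1 : (Rm (a, b, c, d)).1 = x1)
    (h2 : (Rm (a - 1, b, c, d)).1 = x1) :
    x1 = b ∧ max b d + c ≤ a + b - 1 := by
  simp only [Rm] at h1 h2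
  omega

lemma D1 (a b c d : ℤ) (hstar : max b d + c ≤ a + b - 1) : c ≤ a - 2 ∨ c = a - 1 := by
  omega

lemma D2 (a b c d : ℤ) (hstar : max b d + c ≤ a + b - 1) (hc : c ≤ a - 2) :
    c + d ≤ a + b - 2 ∨ c + d = a + b - 1 := by
  omega

lemma L2 (a b c d y1 y2 y3 y4 : ℤ) (ha : 2 ≤ a) (hb : 1 ≤ b) (hd0 : 0 ≤ d)
    (hstar : max b d + c ≤ a + b - 1) (hc : c = a - 1)
    (hy : Rm (a - 1 - 1, b, c, d) = (y1, y2, y3, y4))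
    (hw1 : (Sm (y1 - 1, y2, y3, y4)).1 = a - 1 - 1) : False := by
  simp only [Rm, Sm, Prod.mk.injEq] at hy hw1
  obtain ⟨hy1, hy2, hy3, hy4⟩ := hy
  have hdb : d ≤ b := by clear hy1 hy2 hy3 hy4 hw1; omega
  have f1 : min b d = d := by clear hy1 hy2 hy3 hy4 hw1; omega
  have f2 : max b d = b := by clear hy1 hy2 hy3 hy4 hw1; omega
  have f3 : max (a - 1 - 1) c = c := by clear hy1 hy2 hy3 hy4 hw1; omega
  have f4 : min (a - 1 - 1) c = a - 1 - 1 := by clear hy1 hy2 hy3 hy4 hw1; omega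
  have f5 : min (c + d) (a - 1 - 1 + min b d) = a - 1 - 1 + d := by
    clear hy1 hy2 hy3 hy4 hw1; omega
  have f6 : max (2 * min (c + d) (a - 1 - 1 + min b d))
      (max (a - 1 - 1) c + 2 * b + min (a - 1 - 1) c) = 2 * a + 2 * b - 3 := by
    clear hy1 hy2 hy3 hy4 hw1; omega
  omega

lemma L4 (a b c d x1 x2 x3 x4 : ℤ) (ha : 2 ≤ a) (hb : 1 ≤ b) (hc0 : 0 ≤ c)
    (hc : c ≤ a - 2) (hcd : c + d = a + b - 1)
    (hR : Rm (a, b, c, d) = (x1, x2, x3, x4)) :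
    x2 = a - 2 ∧ x3 = b + 1 ∧ x4 = c := by
  simp only [Rm, Prod.mk.injEq] at hR
  obtain ⟨hR1, hR2, hR3, hR4⟩ := hR
  have f1 : max a c = a := by clear hR1 hR2 hR3 hR4; omega
  have f2 : min a c = c := by clear hR1 hR2 hR3 hR4; omega
  have f3 : min (c + d) (a + min b d) = a + b - 1 := by clear hR1 hR2 hR3 hR4; omega
  have f4 : max (2 * min (c + d) (a + min b d)) (max a c + 2 * b + min a c)
      = 2 * a + 2 * b - 2 := by clear hR1 hR2 hR3 hR4; omega
  omega

lemma L5 (a b c d y1 y2 y3 y4 : ℤ) (ha : 2 ≤ a) (hb : 1 ≤ b) (hc0 : 0 ≤ c) (hd0 : 0 ≤ d)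
    (hc : c ≤ a - 2) (hcd : c + d ≤ a + b - 2)
    (hy : Rm (a - 1 - 1, b, c, d) = (y1, y2, y3, y4))
    (hw1 : (Sm (y1 - 1, y2, y3, y4)).1 = a - 1 - 1) : False := by
  simp only [Rm, Sm, Prod.mk.injEq] at hy hw1
  obtain ⟨hy1, hy2, hy3, hy4⟩ := hy
  have f1 : max (a - 1 - 1) c = a - 1 - 1 := by clear hy1 hy2 hy3 hy4 hw1; omega
  have f2 : min (a - 1 - 1) c = c := by clear hy1 hy2 hy3 hy4 hw1; omega
  have f3 : min (c + d) (a - 1 - 1 + min b d) = c + d := by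
    clear hy1 hy2 hy3 hy4 hw1; omega
  have f4 : y1 = b := by clear hy2 hy3 hy4 hw1; omega
  omega

lemma key (a b c d x1 x2 x3 x4 y1 y2 y3 y4 : ℤ) (ha : 2 ≤ a) (hx : 0 < x1)
    (hb0 : 0 ≤ b) (hc0 : 0 ≤ c) (hd0 : 0 ≤ d)
    (hR : Rm (a, b, c, d) = (x1, x2, x3, x4))
    (hm1e : (Rm (a - 1, b, c, d)).1 = x1)
    (hy : Rm (a - 1 - 1, b, c, d) = (y1, y2, y3, y4))
    (hw1 : (Sm (y1 - 1, y2, y3, y4)).1 = a - 1 - 1) :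
    d = a + b - c - 1 ∧ x1 = b ∧ x2 = a - 2 ∧ x3 = b + 1 ∧ x4 = c ∧
      c ≤ a - 2 ∧ 1 ≤ b := by
  obtain ⟨e1, hstar⟩ := L1 a b c d x1 (congrArg Prod.fst hR) hm1e
  have hb : 1 ≤ b := by clear hR hy hw1 hm1e; omega
  rcases D1 a b c d hstar with hc | hc
  · rcases D2 a b c d hstar hc with hcd | hcd
    · exact (L5 a b c d y1 y2 y3 y4 ha hb hc0 hd0 hc hcd hy hw1).elim
    · obtain ⟨g1, g2, g3⟩ := L4 a b c d x1 x2 x3 x4 ha hb hc0 hc hcd hR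
      exact ⟨by clear hR hy hw1 hm1e; omega, e1, g1, g2, g3, hc, hb⟩
  · exact (L2 a b c d y1 y2 y3 y4 ha hb hd0 hstar hc hy hw1).elim

lemma Lrev1 (a b c : ℤ) (ha : 2 ≤ a) (hb : 1 ≤ b) (hc0 : 0 ≤ c) (hc2 : c ≤ a - 2) :
    Rm (a - 1 - 1, b, c, a + b - c - 1) = (b + 1, a - 2, b, c) := by
  simp only [Rm, Prod.mk.injEq]
  omega

lemma Lrev2 (a b c : ℤ) (ha : 2 ≤ a) (hb : 1 ≤ b) (hc0 : 0 ≤ c) (hc2 : c ≤ a - 2) :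
    (Sm (b + 1 - 1, a - 2, b, c)).1 = a - 1 - 1 := by
  simp only [Sm]
  omega

lemma Lrev3 (a b c : ℤ) (ha : 2 ≤ a) (hb : 1 ≤ b) (hc0 : 0 ≤ c) (hc2 : c ≤ a - 2) :
    (Rm (a - 1, b, c, a + b - c - 1)).1 = b := by
  simp only [Rm]
  omega

lemma Lrev4 (a b c : ℤ) (ha : 2 ≤ a) (hb : 1 ≤ b) (hc0 : 0 ≤ c) (hc2 : c ≤ a - 2) :
    (Sm (b - 1, a - 2, b + 1, c)).1 = a + 2 := by
  simp only [Sm]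
  omega

set_option maxHeartbeats 1000000 in
theorem stmt_10 (l1 l2 : ℕ) :
    {m : M | m ∈ Bset (l1 : ℤ) (l2 : ℤ) ∧ 2 ≤ eps1 m ∧ 0 < eps2 m ∧
        (∃ u, chainM [e1m, e1m] m = some u ∧ 0 < eps2 u ∧
          ∃ w, e2m u = some w ∧ eps1 w = eps1 u) ∧
        (∃ m1, e1m m = some m1 ∧ eps2 m1 = eps2 m) ∧
        (∃ m2, e2m m = some m2 ∧ eps1 m2 = eps1 m + 2)} =
      {m : M | ∃ a b c : ℤ, 2 ≤ a ∧ 1 ≤ b ∧ 0 ≤ c ∧ c ≤ a - 2 ∧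
          m = ((a, b, c, a + b - c - 1), (b, a - 2, b + 1, c))} ∩
        Bset (l1 : ℤ) (l2 : ℤ) := by
  ext m
  simp only [Set.mem_setOf_eq, Set.mem_inter_iff]
  constructor
  · intro hm
    obtain ⟨⟨a1, a2, a3, a4⟩, x1, x2, x3, x4⟩ := m
    obtain ⟨hB, h1, h2, ⟨u, hu, hu2, w, hw, hw1⟩, ⟨m1, hm1, hm1e⟩, ⟨m2, hm2, hm2e⟩⟩ := hm
    obtain ⟨hN1, hN2, hR, hl1, hl2⟩ := id hB
    simp only [eps1, eps2] at h1 h2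
    rw [chain2_pos _ (show (0:ℤ) < a1 by omega) (show (0:ℤ) < a1 - 1 by omega)] at hu
    obtain rfl := Option.some.inj hu
    obtain ⟨⟨y1, y2, y3, y4⟩, hy⟩ : ∃ y : V4,
        Rm (a1 - 1 - 1, a2, a3, a4) = y := ⟨_, rfl⟩
    rw [hy] at hu2 hw hw1
    rw [e2m_pos _ hu2] at hw
    obtain rfl := Option.some.inj hw
    rw [e1m_pos _ (show (0:ℤ) < a1 by omega)] at hm1
    obtain rfl := Option.some.inj hm1
    obtain ⟨k1, k2, k3, k4, k5, k6, k7⟩ :=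
      key a1 a2 a3 a4 x1 x2 x3 x4 y1 y2 y3 y4 h1 h2 hN1.2.1 hN1.2.2.1 hN1.2.2.2
        hR hm1e hy hw1
    refine ⟨⟨a1, a2, a3, h1, k7, hN1.2.2.1, k6, ?_⟩, hB⟩
    rw [k1, k2, k3, k4, k5]
  · rintro ⟨⟨a, b, c, ha, hb, hc0, hc2, rfl⟩, hB⟩
    refine ⟨hB, ha, show (0:ℤ) < b by omega, ?_, ?_, ?_⟩
    · have hch := chain2_pos ((a, b, c, a + b - c - 1), (b, a - 2, b + 1, c))
        (show (0:ℤ) < a by omega) (show (0:ℤ) < a - 1 by omega)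
      rw [Lrev1 a b c ha hb hc0 hc2] at hch
      exact ⟨_, hch, show (0:ℤ) < b + 1 by omega, _,
        e2m_pos _ (show (0:ℤ) < b + 1 by omega), Lrev2 a b c ha hb hc0 hc2⟩
    · exact ⟨_, e1m_pos _ (show (0:ℤ) < a by omega), Lrev3 a b c ha hb hc0 hc2⟩
    · exact ⟨_, e2m_pos _ (show (0:ℤ) < b by omega), Lrev4 a b c ha hb hc0 hc2⟩
end

section
/- Let λ ∈ ℕ² and x ∈ B(λ) with ẽ₁x ≠ 0 ≠ ẽ₂x, ε₁(x) ≥ 2 and (Δ^e_ε(1,2,x), Δ^e_ε(2,1,x)) = (1,1). Then there exists z ≠ 0 with z = ẽ₁ẽ₂²ẽ₁²x = ẽ₁ẽ₂ẽ₁ẽ₂ẽ₁x = ẽ₂ẽ₁³ẽ₂x (all intermediate applications nonzero). -/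
/-!
S ∘ R is the identity on the cone a₄ ≤ a₂, so there an element (a, R a) of B(λ) is determined by
a: ẽ₁ lowers a₁, and ẽ₂ lowers the first entry of R a and pulls back along R. On that cone R has a
closed form, from which ẽ₂ acts by (a₁, a₂, a₃, a₄) ↦ (a₁, a₂ + 1, a₃ - 2, a₄) when a₃ ≥ a₁ + 2,
and by (a₁, a₂, a₁ + 1, a₄) ↦ (a₁ + 1, a₂, a₁, a₄). The condition Δ^e_ε(2,1,x) = 1 forces x to
have a-coordinates (p, q, p + 1, r) with r ≤ q, and from there all three words reach
(p - 2, q + 1, p - 2, r).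
-/

def mkR (a : V4) : M := (a, Rm a)

theorem Rm_of_le {a b c d : ℤ} (h : d ≤ b) :
    Rm (a, b, c, d) = (b + max 0 (c - a), min a c, d, max a c + 2 * b - 2 * d) := by
  simp only [Rm, Prod.mk.injEq]
  omega

theorem Sm_Rm_of_le {a b c d : ℤ} (h : d ≤ b) : Sm (Rm (a, b, c, d)) = (a, b, c, d) := by
  rw [Rm_of_le h]
  simp only [Sm, Prod.mk.injEq]
  omega

theorem e1m_mkR {a b c d : ℤ} (h : 0 < a) :
    e1m (mkR (a, b, c, d)) = some (mkR (a - 1, b, c, d)) := by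
  simp only [e1m, mkR]
  exact if_pos h

theorem e2m_mkR_of_Rm_eq {a a' : V4} (hpos : 0 < (Rm a).1)
    (hR : Rm a' = ((Rm a).1 - 1, (Rm a).2)) (hS : Sm (Rm a') = a') :
    e2m (mkR a) = some (mkR a') := by
  simp only [e2m, mkR, if_pos hpos, ← hR, hS]

theorem e2m_mkR_of_add_two_le {a b c d : ℤ} (hb : 0 ≤ b) (hdb : d ≤ b) (hc : a + 2 ≤ c) :
    e2m (mkR (a, b, c, d)) = some (mkR (a, b + 1, c - 2, d)) := by
  refine e2m_mkR_of_Rm_eq ?_ ?_ (Sm_Rm_of_le (by omega))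
  · rw [Rm_of_le hdb]
    dsimp only
    omega
  · rw [Rm_of_le hdb, Rm_of_le (by omega)]
    simp only [Prod.mk.injEq, true_and]
    omega

theorem e2m_mkR_of_eq_add_one {a b c d : ℤ} (hb : 0 ≤ b) (hdb : d ≤ b) (hc : c = a + 1) :
    e2m (mkR (a, b, c, d)) = some (mkR (c, b, a, d)) := by
  refine e2m_mkR_of_Rm_eq ?_ ?_ (Sm_Rm_of_le hdb)
  · rw [Rm_of_le hdb]
    dsimp only
    omega
  · rw [Rm_of_le hdb, Rm_of_le hdb]
    simp only [Prod.mk.injEq, true_and]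
    omega

theorem eq_add_one_and_le_of_Sm_lower_Rm {a b c d : ℤ}
    (h : (Sm ((Rm (a, b, c, d)).1 - 1, (Rm (a, b, c, d)).2)).1 = a + 1) :
    c = a + 1 ∧ d ≤ b := by
  simp only [Rm, Sm] at h
  omega

theorem exists_eq_mkR_of_eps1_e2m {l1 l2 : ℤ} {x x' : M} (hx : x ∈ Bset l1 l2)
    (he : e2m x = some x') (hD : eps1 x' = eps1 x + 1) :
    ∃ p q r : ℤ, x = mkR (p, q, p + 1, r) ∧ 0 ≤ q ∧ r ≤ q := by
  obtain ⟨⟨p, q, c, r⟩, y⟩ := x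
  obtain ⟨⟨-, hq, -, -⟩, -, hR, -, -⟩ := hx
  dsimp only at hR
  subst hR
  simp only [e2m] at he
  split_ifs at he
  cases he
  obtain ⟨rfl, hrq⟩ := eq_add_one_and_le_of_Sm_lower_Rm hD
  exact ⟨p, q, r, rfl, hq, hrq⟩

theorem stmt_12_general (l1 l2 : ℕ) (x : M) (hx : x ∈ Bset (l1 : ℤ) (l2 : ℤ))
    (x2e : M) (he2 : e2m x = some x2e)
    (heps : 2 ≤ eps1 x)
    (hD2 : eps1 x2e = eps1 x + 1) :
    ∃ z : M, chainM [e1m, e2m, e2m, e1m, e1m] x = some z ∧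
      chainM [e1m, e2m, e1m, e2m, e1m] x = some z ∧
      chainM [e2m, e1m, e1m, e1m, e2m] x = some z := by
  obtain ⟨p, q, r, rfl, hq, hrq⟩ := exists_eq_mkR_of_eps1_e2m hx he2 hD2
  have hp : 2 ≤ p := heps
  refine ⟨mkR (p - 2, q + 1, p - 2, r), ?_, ?_, ?_⟩ <;>
  simp (disch := omega) only [chainM, List.foldr_cons, List.foldr_nil, Option.bind_some,
    e1m_mkR, e2m_mkR_of_add_two_le, e2m_mkR_of_eq_add_one]
  <;> ring_nf

theorem stmt_12 (l1 l2 : ℕ) (x : M) (hx : x ∈ Bset (l1 : ℤ) (l2 : ℤ))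
    (x1e x2e : M) (he1 : e1m x = some x1e) (he2 : e2m x = some x2e)
    (heps : 2 ≤ eps1 x)
    (hD1 : eps2 x1e = eps2 x + 1) (hD2 : eps1 x2e = eps1 x + 1) :
    ∃ z : M, chainM [e1m, e2m, e2m, e1m, e1m] x = some z ∧
      chainM [e1m, e2m, e1m, e2m, e1m] x = some z ∧
      chainM [e2m, e1m, e1m, e1m, e2m] x = some z :=
  stmt_12_general l1 l2 x hx x2e he2 heps hD2
end

section
/- Let λ ∈ ℕ² and x ∈ B(λ) with ẽ₁x ≠ 0 ≠ ẽ₂x, (Δ^e_ε(1,2,x), Δ^e_ε(2,1,x)) = (0,2), ẽ₂ẽ₁²x ≠ 0 and Δ^e_ε(2,1,ẽ₁²x) = 0. Then there exists z ≠ 0 with z = ẽ₁ẽ₂²ẽ₁²x = ẽ₂ẽ₁²ẽ₂ẽ₁x = ẽ₂ẽ₁³ẽ₂x (all intermediate applications nonzero). -/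
/- auxiliary lemmas -/

lemma e1m_some' (a b c d : ℤ) (y : V4) (h : 0 < a) :
    e1m ((a,b,c,d), y) = some ((a-1,b,c,d), Rm (a-1,b,c,d)) := by
  simp [e1m, h]

lemma e2m_some' (y : V4) (p q r s : ℤ) (h : 0 < p) :
    e2m (y, (p,q,r,s)) = some (Sm (p-1,q,r,s), (p-1,q,r,s)) := by
  simp [e2m, h]

lemma e1m_inv' (a b c d : ℤ) (y : V4) (z : M) (h : e1m ((a,b,c,d), y) = some z) :
    0 < a ∧ z = ((a-1,b,c,d), Rm (a-1,b,c,d)) := by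
  by_cases h' : 0 < a
  · refine ⟨h', ?_⟩
    rw [e1m_some' a b c d y h'] at h
    exact (Option.some.injEq _ _ ▸ h).symm
  · simp [e1m, h'] at h

lemma e2m_inv' (y : V4) (p q r s : ℤ) (z : M) (h : e2m (y, (p,q,r,s)) = some z) :
    0 < p ∧ z = (Sm (p-1,q,r,s), (p-1,q,r,s)) := by
  by_cases h' : 0 < p
  · refine ⟨h', ?_⟩
    rw [e2m_some' y p q r s h'] at h
    exact (Option.some.injEq _ _ ▸ h).symm
  · simp [e2m, h'] at h

lemma stepA (a b c d p : ℤ)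
    (h1 : max b (max b d + c - a) = p)
    (h2 : max b (max b d + c - (a-1)) = p) :
    p = b ∧ max b d + c + 1 ≤ a + b := by omega

set_option maxHeartbeats 2000000 in
lemma stepB (a b c d t1 t2 t3 t4 : ℤ)
    (hA : max b d + c + 1 ≤ a + b)
    (hT : Rm (a-2,b,c,d) = (t1,t2,t3,t4))
    (hD3 : (Sm (t1-1,t2,t3,t4)).1 = a-2) :
    c + d = a + b - 1 ∧ c + 2 ≤ a := by
  simp only [Rm, Sm, Prod.mk.injEq] at hT hD3
  omega

section evals
variable {a b c d : ℤ}
  (k1 : c + d = a + b - 1) (k2 : c + 2 ≤ a) (k3 : 1 ≤ b) (k4 : 0 ≤ c) (k5 : 0 ≤ d)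
include k1 k2 k3 k4 k5

lemma evalRm0 : Rm (a,b,c,d) = (b, a-2, b+1, c) := by
  simp only [Rm, Prod.mk.injEq]; omega
lemma evalRm1 : Rm (a-1,b,c,d) = (b, a-1, b, c) := by
  simp only [Rm, Prod.mk.injEq]; omega
lemma evalRm2 : Rm (a-2,b,c,d) = (b+1, a-2, b, c) := by
  simp only [Rm, Prod.mk.injEq]; omega
lemma evalS5 : Sm (b-1, a-2, b, c) = (a, b-1, c, d-1) := by
  simp only [Sm, Prod.mk.injEq]; omega
lemma evalRm6 : Rm (a-1, b-1, c, d-1) = (b-1, a-1, b-1, c) := by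
  simp only [Rm, Prod.mk.injEq]; omega
lemma evalS7 : Sm (b-1, a-1, b, c) = (a+1, b-1, c, d) := by
  simp only [Sm, Prod.mk.injEq]; omega
lemma evalRm9 : Rm (a-1, b-1, c, d) = (b, a-1, b-1, c) := by
  simp only [Rm, Prod.mk.injEq]; omega
lemma evalS10 : Sm (b-1, a-1, b-1, c) = (a-1, b-1, c, d-1) := by
  simp only [Sm, Prod.mk.injEq]; omega
lemma evalS11 : Sm (b-1, a-2, b+1, c) = (a+2, b-1, c, d) := by
  simp only [Sm, Prod.mk.injEq]; omega

end evals

theorem stmt_13 (l1 l2 : ℕ) (x : M) (hx : x ∈ Bset (l1 : ℤ) (l2 : ℤ))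
    (x1e x2e : M) (he1 : e1m x = some x1e) (he2 : e2m x = some x2e)
    (hD1 : eps2 x1e = eps2 x) (hD2 : eps1 x2e = eps1 x + 2)
    (u w : M) (hu : chainM [e1m, e1m] x = some u) (hw : e2m u = some w)
    (hD3 : eps1 w = eps1 u) :
    ∃ z : M, chainM [e1m, e2m, e2m, e1m, e1m] x = some z ∧
      chainM [e2m, e1m, e1m, e2m, e1m] x = some z ∧
      chainM [e2m, e1m, e1m, e1m, e2m] x = some z := by
  obtain ⟨⟨a, b, c, d⟩, p, q, r, s⟩ := x
  obtain ⟨⟨ha0, hb0, hc0, hd0⟩, ⟨hp0, hq0, hr0, hs0⟩, hR, -, -⟩ := hx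
  clear hD2
  -- extract from he1
  obtain ⟨ha, rfl⟩ := e1m_inv' a b c d _ _ he1
  -- extract from he2
  obtain ⟨hpp, rfl⟩ := e2m_inv' _ p q r s _ he2
  -- extract from hu : chain of two e1m's
  simp only [chainM, List.foldr, Option.bind_some] at hu
  rw [e1m_some' a b c d _ ha, Option.bind_some] at hu
  obtain ⟨ha1, rfl⟩ := e1m_inv' (a-1) b c d _ _ hu
  rw [show (a:ℤ)-1-1 = a-2 by ring] at hw hD3
  clear hu he1 he2
  -- name the t-tuple
  obtain ⟨⟨t1, t2, t3, t4⟩, hT⟩ : ∃ t : V4, Rm (a-2,b,c,d) = t := ⟨_, rfl⟩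
  rw [hT] at hw
  obtain ⟨ht1, rfl⟩ := e2m_inv' _ t1 t2 t3 t4 _ hw
  simp only [eps1, eps2] at hD1 hD3
  -- scalarize hD1 and hR first components for stepA
  have hR1 : max b (max b d + c - a) = p := by
    have := congrArg Prod.fst hR
    simpa only [Rm] using this
  have hD1' : max b (max b d + c - (a-1)) = p := by
    simpa only [Rm] using hD1
  obtain ⟨hpb, hmax⟩ := stepA a b c d p hR1 hD1'
  -- key facts
  obtain ⟨hk1, hk2⟩ := stepB a b c d t1 t2 t3 t4 hmax hT hD3
  have hk3 : 1 ≤ b := by omega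
  clear hT hD3 hD1 hD1' hR1 ht1 hw
  -- values of p q r s
  have hR' : ((b:ℤ), a-2, b+1, c) = (p, q, r, s) := by
    have h0 : Rm (a,b,c,d) = (p,q,r,s) := by simpa using hR
    rw [← h0, evalRm0 hk1 hk2 hk3 hc0 hd0]
  simp only [Prod.mk.injEq] at hR'
  obtain ⟨rfl, rfl, rfl, rfl⟩ := hR'
  clear hR hpb hpp hmax
  -- the common value
  refine ⟨((a-1, b-1, c, d-1), (b-1, a-1, b-1, c)), ?_, ?_, ?_⟩
  · -- chain 1 : e1, e1, e2, e2, e1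
    simp only [chainM, List.foldr, Option.bind_some]
    rw [e1m_some' a b c d _ ha, Option.bind_some,
        e1m_some' (a-1) b c d _ ha1, Option.bind_some,
        show (a:ℤ)-1-1 = a-2 by ring, evalRm2 hk1 hk2 hk3 hc0 hd0,
        e2m_some' _ (b+1) (a-2) b c (by omega), Option.bind_some,
        show (b:ℤ)+1-1 = b by ring,
        e2m_some' _ b (a-2) b c (by omega), Option.bind_some,
        evalS5 hk1 hk2 hk3 hc0 hd0,
        e1m_some' a (b-1) c (d-1) _ (by omega),
        evalRm6 hk1 hk2 hk3 hc0 hd0]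
  · -- chain 2 : e1, e2, e1, e1, e2
    simp only [chainM, List.foldr, Option.bind_some]
    rw [e1m_some' a b c d _ ha, Option.bind_some,
        evalRm1 hk1 hk2 hk3 hc0 hd0,
        e2m_some' _ b (a-1) b c (by omega), Option.bind_some,
        evalS7 hk1 hk2 hk3 hc0 hd0,
        e1m_some' (a+1) (b-1) c d _ (by omega), Option.bind_some,
        show (a:ℤ)+1-1 = a by ring,
        e1m_some' a (b-1) c d _ (by omega), Option.bind_some,
        evalRm9 hk1 hk2 hk3 hc0 hd0,
        e2m_some' _ b (a-1) (b-1) c (by omega),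
        evalS10 hk1 hk2 hk3 hc0 hd0]
  · -- chain 3 : e2, e1, e1, e1, e2
    simp only [chainM, List.foldr, Option.bind_some]
    rw [e2m_some' _ b (a-2) (b+1) c (by omega), Option.bind_some,
        evalS11 hk1 hk2 hk3 hc0 hd0,
        e1m_some' (a+2) (b-1) c d _ (by omega), Option.bind_some,
        show (a:ℤ)+2-1 = a+1 by ring,
        e1m_some' (a+1) (b-1) c d _ (by omega), Option.bind_some,
        show (a:ℤ)+1-1 = a by ring,
        e1m_some' a (b-1) c d _ (by omega), Option.bind_some,
        evalRm9 hk1 hk2 hk3 hc0 hd0,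
        e2m_some' _ b (a-1) (b-1) c (by omega),
        evalS10 hk1 hk2 hk3 hc0 hd0]
end

section
/- Let X be a good I-colored directed graph with a maximum element x₀ and with the homogeneous local confluence property. Then the weight multiset wt(x) ∈ ℕ[I] is well-defined: for any x ∈ X and any two words (i₁,…,i_s), (j₁,…,j_t) ∈ I^* with f̃_{i₁}⋯f̃_{i_s} x₀ = x = f̃_{j₁}⋯f̃_{j_t} x₀, the multisets {i₁,…,i_s} and {j₁,…,j_t} coincide (in particular s = t). -/
def iterOpt {X : Type*} (g : X → Option X) : ℕ → X → Option X
  | 0, x => some x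
  | n+1, x => (g x).bind (iterOpt g n)

def chainOpt {X I : Type*} (g : I → X → Option X) (w : List I) (x : X) : Option X :=
  w.foldr (fun i o => o.bind (g i)) (some x)

/-- A good I-colored directed graph: partial operators `e i`, `f i` that are mutually
inverse partial bijections, together with the (finite) string lengths `eps`, `phi`. -/
structure GoodGraph (I : Type*) (X : Type*) where
  e : I → X → Option X
  f : I → X → Option X
  eps : I → X → ℕ
  phi : I → X → ℕ
  ef : ∀ i x y, e i y = some x ↔ f i x = some y
  eps_ne : ∀ i x, iterOpt (e i) (eps i x) x ≠ none
  eps_top : ∀ i x, iterOpt (e i) (eps i x + 1) x = none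
  phi_ne : ∀ i x, iterOpt (f i) (phi i x) x ≠ none
  phi_top : ∀ i x, iterOpt (f i) (phi i x + 1) x = none

/-- Maximum element: no incoming arrows, and every element reachable from it. -/
def IsMaxElem {I X : Type*} (G : GoodGraph I X) (x0 : X) : Prop :=
  (∀ i, G.e i x0 = none) ∧ ∀ x, ∃ w : List I, chainOpt G.f w x0 = some x

/-- Homogeneous local confluence property. -/
def HLC {I X : Type*} (G : GoodGraph I X) : Prop :=
  ∀ (x : X) (i j : I), i ≠ j → G.e i x ≠ none → G.e j x ≠ none →
    ∃ (w w' : List I) (z : X), 2 ≤ w.length ∧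
      (w : Multiset I) = (w' : Multiset I) ∧
      w.getLast? = some i ∧ w'.getLast? = some j ∧
      chainOpt G.e w x = some z ∧ chainOpt G.e w' x = some z

def axS2 {I X : Type*} (A : I → I → ℤ) (G : GoodGraph I X) : Prop :=
  ∀ i j : I, i ≠ j → ∀ x y : X, G.e i x = some y →
    ((G.phi j y : ℤ) - G.phi j x) - ((G.eps j y : ℤ) - G.eps j x) = A j i

def axS3 {I X : Type*} (G : GoodGraph I X) : Prop :=
  ∀ i j : I, i ≠ j → ∀ x y : X, G.e i x = some y →
    G.phi j y ≤ G.phi j x ∧ G.eps j x ≤ G.eps j y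

def axS4 {I X : Type*} (G : GoodGraph I X) : Prop :=
  ∀ i j : I, i ≠ j → ∀ x xi xj : X, G.e i x = some xi → G.e j x = some xj →
    ((G.eps j xi = G.eps j x →
        ∃ z, G.e j xi = some z ∧ G.e i xj = some z ∧ G.phi i xi = G.phi i z) ∧
     (G.eps j xi = G.eps j x + 1 → G.eps i xj = G.eps i x + 1 →
        ∃ z zi zj, chainOpt G.e [i, j, j, i] x = some z ∧
          chainOpt G.e [j, i, i, j] x = some z ∧
          G.f i z = some zi ∧ G.f j z = some zj ∧
          G.phi j zi = G.phi j z + 1 ∧ G.phi i zj = G.phi i z + 1))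

def axS5 {I X : Type*} (G : GoodGraph I X) : Prop :=
  ∀ i j : I, i ≠ j → ∀ x xi xj : X, G.f i x = some xi → G.f j x = some xj →
    ((G.phi j xi = G.phi j x →
        ∃ z, G.f j xi = some z ∧ G.f i xj = some z ∧ G.eps i xi = G.eps i z) ∧
     (G.phi j xi = G.phi j x + 1 → G.phi i xj = G.phi i x + 1 →
        ∃ z zi zj, chainOpt G.f [i, j, j, i] x = some z ∧
          chainOpt G.f [j, i, i, j] x = some z ∧
          G.e i z = some zi ∧ G.e j z = some zj ∧
          G.eps j zi = G.eps j z + 1 ∧ G.eps i zj = G.eps i z + 1))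

/-- `X` is `A`-regular. -/
def ARegular {I X : Type*} (A : I → I → ℤ) (G : GoodGraph I X) : Prop :=
  axS2 A G ∧ axS3 G ∧ axS4 G ∧ axS5 G

/-- (S6), for the ordered pair (i,j) with a_{ij} = -2, a_{ji} = -1. -/
def axS6 {I X : Type*} (G : GoodGraph I X) (i j : I) : Prop :=
  ∀ x xi xj : X, G.e i x = some xi → G.e j x = some xj →
    G.eps j xi = G.eps j x + 1 → G.eps i xj = G.eps i x + 2 →
    ∃ y y', chainOpt G.e [i, i, j] x = some y ∧
      chainOpt G.e [i, i, j, j, i] x = some y' ∧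
      ∀ fy fy', G.f i y = some fy → G.f i y' = some fy' →
        (¬ (G.phi j fy = G.phi j y + 1 ∧ G.phi j fy' = G.phi j y')) ∧
        (G.phi j fy = G.phi j y + 1 → G.phi j fy' = G.phi j y' + 1 →
          ∃ t, G.e i y = some t ∧ G.f j y' = some t ∧ G.phi i t = G.phi i y' + 1) ∧
        (G.phi j fy = G.phi j y → G.phi j fy' = G.phi j y' + 1 →
          ∃ z zi zj, chainOpt G.e [j, i, i, i, j, j, i] x = some z ∧
            chainOpt G.e [i, j, j, i, i, i, j] x = some z ∧
            G.f i z = some zi ∧ G.f j z = some zj ∧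
            G.phi j zi = G.phi j z + 1 ∧ G.phi i zj = G.phi i z + 2) ∧
        (G.phi j fy = G.phi j y → G.phi j fy' = G.phi j y' →
          ∃ t, G.e i y = some t ∧ G.f j y' = some t ∧ G.phi i t = G.phi i y' + 2 ∧
            ∃ u v, chainOpt G.f [i, i] y' = some u ∧ G.f j u = some v ∧
              G.phi i v = G.phi i u)

/-- (S7). -/
def axS7 {I X : Type*} (G : GoodGraph I X) (i j : I) : Prop :=
  ∀ x xi xj : X, G.f i x = some xi → G.f j x = some xj →
    G.phi j xi = G.phi j x + 1 → G.phi i xj = G.phi i x + 2 →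
    ∃ y y', chainOpt G.f [i, i, j] x = some y ∧
      chainOpt G.f [i, i, j, j, i] x = some y' ∧
      ∀ ey ey', G.e i y = some ey → G.e i y' = some ey' →
        G.eps j ey = G.eps j y → G.eps j ey' = G.eps j y' + 1 →
        ∃ z, chainOpt G.f [j, i, i, i, j, j, i] x = some z ∧
          chainOpt G.f [i, j, j, i, i, i, j] x = some z

/-- (S8). -/
def axS8 {I X : Type*} (G : GoodGraph I X) (i j : I) : Prop :=
  ∀ x xi xj : X, G.f i x = some xi → G.f j x = some xj →
    G.phi j xi = G.phi j x + 1 → G.phi i xj = G.phi i x + 1 → 2 ≤ G.phi i x →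
    ∃ z, chainOpt G.f [i, j, j, i, i] x = some z ∧
      chainOpt G.f [j, i, i, i, j] x = some z

/-- (S9). -/
def axS9 {I X : Type*} (G : GoodGraph I X) (i j : I) : Prop :=
  ∀ x xi xj : X, G.f i x = some xi → G.f j x = some xj →
    G.phi j xi = G.phi j x → G.phi i xj = G.phi i x + 2 →
    ∀ v u, chainOpt G.f [i, i] x = some v → G.f j v = some u → G.phi i u = G.phi i v →
    ∃ z, chainOpt G.f [i, j, j, i, i] x = some z ∧
      chainOpt G.f [j, i, i, i, j] x = some z

def IsGCM {I : Type*} (A : I → I → ℤ) : Prop :=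
  (∀ i, A i i = 2) ∧ (∀ i j, i ≠ j → A i j ≤ 0) ∧ (∀ i j, A i j = 0 ↔ A j i = 0)

def IsSymmetrizable {I : Type*} (A : I → I → ℤ) : Prop :=
  ∃ d : I → ℤ, (∀ i, 0 < d i) ∧ ∀ i j, d i * A i j = d j * A j i

/-- Every 2×2 principal submatrix of `A` is `A₁⊕A₁`, `A₂`, `B₂` or `ᵗB₂`. -/
def Rank2OK {I : Type*} (A : I → I → ℤ) : Prop :=
  ∀ i j, i ≠ j →
    (A i j = 0 ∧ A j i = 0) ∨ (A i j = -1 ∧ A j i = -1) ∨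
    (A i j = -2 ∧ A j i = -1) ∨ (A i j = -1 ∧ A j i = -2)

/-- (S6)--(S9) hold for every ordered pair with `A|_{i,j} = B₂`. -/
def ExtraB2 {I X : Type*} (A : I → I → ℤ) (G : GoodGraph I X) : Prop :=
  ∀ i j, A i j = -2 → A j i = -1 →
    axS6 G i j ∧ axS7 G i j ∧ axS8 G i j ∧ axS9 G i j

/-
Induct on the length of one of the two words. If both words end with the same letter `i`,
then `ẽ_i x` is determined and we pass to shorter words. If they end with letters `i ≠ j`,
homogeneous local confluence gives a common descendant `z` of `ẽ_i x` and `ẽ_j x` reached by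
homogeneous words; prefixing a path from `x₀` to `z` yields words to `ẽ_i x` and `ẽ_j x`,
and the induction hypothesis, applied once on each side, compares them with the given ones.
-/

section ChainOpt

variable {I X : Type*}

theorem chainOpt_nil (g : I → X → Option X) (x : X) : chainOpt g [] x = some x := rfl

theorem chainOpt_cons (g : I → X → Option X) (i : I) (w : List I) (x : X) :
    chainOpt g (i :: w) x = (chainOpt g w x).bind (g i) := rfl

theorem chainOpt_append (g : I → X → Option X) (a b : List I) (x : X) :
    chainOpt g (a ++ b) x = (chainOpt g b x).bind (chainOpt g a) := by
  induction a with
  | nil => rw [List.nil_append]; cases chainOpt g b x <;> rfl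
  | cons i a ih => rw [List.cons_append, chainOpt_cons, ih, Option.bind_assoc]; rfl

theorem chainOpt_append_singleton (g : I → X → Option X) (a : List I) (i : I) (x : X) :
    chainOpt g (a ++ [i]) x = (g i x).bind (chainOpt g a) := by
  rw [chainOpt_append]
  rfl

end ChainOpt

namespace GoodGraph

variable {I X : Type*} (G : GoodGraph I X)

theorem chainOpt_f_cons_eq_some {i : I} {w : List I} {x y : X} :
    chainOpt G.f (i :: w) x = some y ↔ ∃ z, chainOpt G.f w x = some z ∧ G.e i y = some z := by
  simp only [chainOpt_cons, Option.bind_eq_some_iff, G.ef]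

theorem chainOpt_f_reverse_of_chainOpt_e {w : List I} {x z : X}
    (h : chainOpt G.e w x = some z) : chainOpt G.f w.reverse z = some x := by
  induction w generalizing z with
  | nil => simpa [chainOpt_nil, eq_comm] using h
  | cons i w ih =>
    obtain ⟨y, hy, hiy⟩ := Option.bind_eq_some_iff.mp h
    rw [List.reverse_cons, chainOpt_append_singleton, (G.ef i z y).mp hiy]
    exact ih hy

theorem eq_nil_of_chainOpt_f_eq_some_self {x0 : X} (hno : ∀ i, G.e i x0 = none)
    {w : List I} (h : chainOpt G.f w x0 = some x0) : w = [] := by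
  obtain _ | ⟨i, w⟩ := w
  · rfl
  obtain ⟨_, _, hi⟩ := G.chainOpt_f_cons_eq_some.mp h
  simp [hno i] at hi

theorem exists_paths_with_equal_weights_of_hLC {x0 : X}
    (hreach : ∀ x, ∃ w, chainOpt G.f w x0 = some x) (hconf : HLC G) {i j : I} (hij : i ≠ j)
    {x y y' : X} (hi : G.e i x = some y) (hj : G.e j x = some y') :
    ∃ u u' : List I, chainOpt G.f u x0 = some y ∧ chainOpt G.f u' x0 = some y' ∧
      ((i :: u : List I) : Multiset I) = (j :: u' : List I) := by
  obtain ⟨w, w', z, -, hww', hwi, hwj', hwz, hwz'⟩ :=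
    hconf x i j hij (by simp [hi]) (by simp [hj])
  obtain ⟨a, rfl⟩ := List.getLast?_eq_some_iff.mp hwi
  obtain ⟨a', rfl⟩ := List.getLast?_eq_some_iff.mp hwj'
  rw [chainOpt_append_singleton, hi, Option.bind_some] at hwz
  rw [chainOpt_append_singleton, hj, Option.bind_some] at hwz'
  obtain ⟨v, hv⟩ := hreach z
  refine ⟨a.reverse ++ v, a'.reverse ++ v, ?_, ?_, ?_⟩
  · rw [chainOpt_append, hv]
    exact G.chainOpt_f_reverse_of_chainOpt_e hwz
  · rw [chainOpt_append, hv]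
    exact G.chainOpt_f_reverse_of_chainOpt_e hwz'
  · have hperm (b : List I) (k : I) :
        ((k :: (b.reverse ++ v) : List I) : Multiset I) = ↑(b ++ [k]) + ↑v := by
      rw [Multiset.coe_add, Multiset.coe_eq_coe, List.append_assoc, List.singleton_append]
      exact (((List.reverse_perm b).append_right v).cons k).trans List.perm_middle.symm
    rw [hperm, hperm, hww']

theorem coe_eq_coe_of_chainOpt_f_eq_some {x0 : X} (hno : ∀ i, G.e i x0 = none)
    (hreach : ∀ x, ∃ w, chainOpt G.f w x0 = some x) (hconf : HLC G) (n : ℕ) :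
    ∀ (w w' : List I) (x : X), w.length = n → chainOpt G.f w x0 = some x →
      chainOpt G.f w' x0 = some x → (w : Multiset I) = w' := by
  induction n with
  | zero =>
    intro w w' x hlen hw hw'
    obtain rfl := List.length_eq_zero_iff.mp hlen
    cases (chainOpt_nil G.f x0).symm.trans hw
    rw [G.eq_nil_of_chainOpt_f_eq_some_self hno hw']
  | succ n ih =>
    intro w w' x hlen hw hw'
    obtain ⟨i, t, rfl⟩ := List.exists_cons_of_length_eq_add_one hlen
    rw [List.length_cons, Nat.add_right_cancel_iff] at hlen
    obtain _ | ⟨j, t'⟩ := w'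
    · cases (chainOpt_nil G.f x0).symm.trans hw'
      cases G.eq_nil_of_chainOpt_f_eq_some_self hno hw
    obtain ⟨y, hty, hiy⟩ := G.chainOpt_f_cons_eq_some.mp hw
    obtain ⟨y', hty', hjy'⟩ := G.chainOpt_f_cons_eq_some.mp hw'
    by_cases hij : i = j
    · subst hij
      cases hiy.symm.trans hjy'
      rw [← Multiset.cons_coe, ← Multiset.cons_coe, ih t t' y hlen hty hty']
    obtain ⟨u, u', hu, hu', hweight⟩ :=
      G.exists_paths_with_equal_weights_of_hLC hreach hconf hij hiy hjy'
    have htu : (t : Multiset I) = u := ih t u y hlen hty hu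
    have hu'len : u'.length = n := by
      have hcard := congrArg Multiset.card hweight
      simp only [Multiset.coe_card, List.length_cons, Nat.add_right_cancel_iff] at hcard
      rw [← hcard, ← Multiset.coe_card, ← htu, Multiset.coe_card, hlen]
    calc ((i :: t : List I) : Multiset I) = (i :: u : List I) := by
          rw [← Multiset.cons_coe, htu, Multiset.cons_coe]
      _ = (j :: u' : List I) := hweight
      _ = (j :: t' : List I) := by
          rw [← Multiset.cons_coe, ih u' t' y' hu'len hu' hty', Multiset.cons_coe]

end GoodGraph

theorem stmt_15_general {I X : Type}
    (G : GoodGraph I X) (x0 : X) (hmax : IsMaxElem G x0) (hconf : HLC G) :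
    ∀ (x : X) (w w' : List I), chainOpt G.f w x0 = some x →
      chainOpt G.f w' x0 = some x → (w : Multiset I) = (w' : Multiset I) := by
  obtain ⟨hno, hreach⟩ := hmax
  exact fun x w w' hw hw' =>
    G.coe_eq_coe_of_chainOpt_f_eq_some hno hreach hconf _ w w' x rfl hw hw'

theorem stmt_15 {I X : Type} [Fintype I] [DecidableEq I]
    (G : GoodGraph I X) (x0 : X) (hmax : IsMaxElem G x0) (hconf : HLC G) :
    ∀ (x : X) (w w' : List I), chainOpt G.f w x0 = some x →
      chainOpt G.f w' x0 = some x → (w : Multiset I) = (w' : Multiset I) :=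
  stmt_15_general G x0 hmax hconf
end

section
/- Let A = (a_{ij}) be a symmetrizable generalized Cartan matrix indexed by a finite set I such that every 2×2 principal submatrix A|_{i,j} (i≠j) is one of A₁⊕A₁ = [[2,0],[0,2]], A₂ = [[2,−1],[−1,2]], B₂ = [[2,−2],[−1,2]] or its transpose. Let X be an A-regular graph with a maximum element that satisfies (S6),(S7),(S8),(S9) for every ordered pair (i,j) with A|_{i,j}=B₂. Then X has the homogeneous local confluence property. -/
/-!
By (S2) and (S3), an `ẽ_i`-step raises `ε_j` by at most `-a_{ji}` and lowers `φ_j` by at most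
`-a_{ji}`. Hence `Δ(x)` is componentwise at most `(1, 1)` unless, up to swapping `i` and `j`,
`A|_{i,j} = B₂` and `Δ(x) = (1, 2)`. In the first case (S4) closes a square or an octagon. In the
second, (S6) applies: the pair `(Δ^f_φ(i,j,y), Δ^f_φ(i,j,y'))` again has entries in `{0, 1}` and
`(1, 0)` is excluded, and each of (P⁻₁), (Q⁻₁) and (R⁻) gives two words with the same letters that
lead to the same element.
-/

theorem chainOpt_cons_eq_some {X I : Type*} {g : I → X → Option X} {a : I} {w : List I}
    {x z : X} : chainOpt g (a :: w) x = some z ↔ ∃ u, chainOpt g w x = some u ∧ g a u = some z :=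
  Option.bind_eq_some_iff

namespace GoodGraph

variable {I X : Type*} (G : GoodGraph I X)

def HomConfluentAt (x : X) (i j : I) : Prop :=
  ∃ (w w' : List I) (z : X), 2 ≤ w.length ∧
    (w : Multiset I) = (w' : Multiset I) ∧
    w.getLast? = some i ∧ w'.getLast? = some j ∧
    chainOpt G.e w x = some z ∧ chainOpt G.e w' x = some z

variable {G}

theorem HomConfluentAt.symm {x : X} {i j : I} (h : G.HomConfluentAt x i j) :
    G.HomConfluentAt x j i := by
  obtain ⟨w, w', z, hlen, hperm, hi, hj, hz, hz'⟩ := h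
  have hlen' : 2 ≤ w'.length := (Multiset.coe_eq_coe.1 hperm).length_eq ▸ hlen
  exact ⟨w', w, z, hlen', hperm.symm, hj, hi, hz', hz⟩

variable {A : I → I → ℤ} {i j : I} {x y : X}

theorem eps_bounds_of_e (hS2 : axS2 A G) (hS3 : axS3 G) (hij : i ≠ j) (h : G.e i x = some y) :
    G.eps j x ≤ G.eps j y ∧ (G.eps j y : ℤ) ≤ G.eps j x - A j i := by
  have := hS2 i j hij x y h
  have := hS3 i j hij x y h
  omega

theorem phi_bounds_of_e (hS2 : axS2 A G) (hS3 : axS3 G) (hij : i ≠ j) (h : G.e i x = some y) :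
    G.phi j y ≤ G.phi j x ∧ (G.phi j x : ℤ) ≤ G.phi j y - A j i := by
  have := hS2 i j hij x y h
  have := hS3 i j hij x y h
  omega

variable {xi xj : X}

theorem homConfluentAt_of_eps_eq (hS4 : axS4 G) (hij : i ≠ j) (hxi : G.e i x = some xi)
    (hxj : G.e j x = some xj) (h : G.eps j xi = G.eps j x) : G.HomConfluentAt x i j := by
  obtain ⟨z, hzi, hzj, -⟩ := (hS4 i j hij x xi xj hxi hxj).1 h
  exact ⟨[j, i], [i, j], z, le_rfl, Multiset.coe_eq_coe.2 (List.Perm.swap _ _ _), rfl, rfl,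
    by simp [chainOpt, hxi, hzi], by simp [chainOpt, hxj, hzj]⟩

theorem homConfluentAt_of_eps_succ (hS4 : axS4 G) (hij : i ≠ j) (hxi : G.e i x = some xi)
    (hxj : G.e j x = some xj) (hi : G.eps j xi = G.eps j x + 1)
    (hj : G.eps i xj = G.eps i x + 1) : G.HomConfluentAt x i j := by
  obtain ⟨z, -, -, hz, hz', -⟩ := (hS4 i j hij x xi xj hxi hxj).2 hi hj
  refine ⟨[i, j, j, i], [j, i, i, j], z, by simp, Multiset.coe_eq_coe.2 ?_, rfl, rfl, hz, hz'⟩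
  classical
  simp only [List.perm_iff_count, List.count_cons, List.count_nil]
  intro a; split_ifs <;> omega

theorem homConfluentAt_of_eps_le_succ (hS3 : axS3 G) (hS4 : axS4 G) (hij : i ≠ j)
    (hxi : G.e i x = some xi) (hxj : G.e j x = some xj)
    (hi : G.eps j xi ≤ G.eps j x + 1) (hj : G.eps i xj ≤ G.eps i x + 1) :
    G.HomConfluentAt x i j := by
  have hi₀ := (hS3 i j hij x xi hxi).2
  have hj₀ := (hS3 j i hij.symm x xj hxj).2
  obtain hi' | hi' : G.eps j xi = G.eps j x ∨ G.eps j xi = G.eps j x + 1 := by omega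
  · exact homConfluentAt_of_eps_eq hS4 hij hxi hxj hi'
  obtain hj' | hj' : G.eps i xj = G.eps i x ∨ G.eps i xj = G.eps i x + 1 := by omega
  · exact (homConfluentAt_of_eps_eq hS4 hij.symm hxj hxi hj').symm
  · exact homConfluentAt_of_eps_succ hS4 hij hxi hxj hi' hj'

theorem homConfluentAt_of_neg_one_le (hS2 : axS2 A G) (hS3 : axS3 G) (hS4 : axS4 G)
    (hij : i ≠ j) (hAij : -1 ≤ A i j) (hAji : -1 ≤ A j i)
    (hxi : G.e i x = some xi) (hxj : G.e j x = some xj) : G.HomConfluentAt x i j := by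
  have hi := (eps_bounds_of_e hS2 hS3 hij hxi).2
  have hj := (eps_bounds_of_e hS2 hS3 hij.symm hxj).2
  exact homConfluentAt_of_eps_le_succ hS3 hS4 hij hxi hxj (by omega) (by omega)

theorem homConfluentAt_of_axS6 (hS2 : axS2 A G) (hS3 : axS3 G) (h6 : axS6 G i j) (hij : i ≠ j)
    (hAji : A j i = -1) (hxi : G.e i x = some xi) (hxj : G.e j x = some xj)
    (hi : G.eps j xi = G.eps j x + 1) (hj : G.eps i xj = G.eps i x + 2) :
    G.HomConfluentAt x i j := by
  obtain ⟨y, y', hy, hy', hS6⟩ := h6 x xi xj hxi hxj hi hj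
  obtain ⟨fy, -, hfy⟩ := chainOpt_cons_eq_some.1 hy
  obtain ⟨fy', -, hfy'⟩ := chainOpt_cons_eq_some.1 hy'
  obtain ⟨hnot10, hP, hQ, hR⟩ :=
    hS6 fy fy' ((G.ef i y fy).1 hfy) ((G.ef i y' fy').1 hfy')
  have hΔy := phi_bounds_of_e hS2 hS3 hij hfy
  have hΔy' := phi_bounds_of_e hS2 hS3 hij hfy'
  -- In cases (P⁻₁) and (R⁻), `ẽ_j ẽ_i y = y'` identifies the words `iijji` and `jiiij`.
  have hPR : ∀ t, G.e i y = some t → G.f j y' = some t → G.HomConfluentAt x i j := by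
    intro t hyt hty'
    refine ⟨[i, i, j, j, i], [j, i, i, i, j], y', by simp, Multiset.coe_eq_coe.2 ?_, rfl, rfl,
      hy', chainOpt_cons_eq_some.2 ⟨t, chainOpt_cons_eq_some.2 ⟨y, hy, hyt⟩, (G.ef j y' t).2 hty'⟩⟩
    classical
    simp only [List.perm_iff_count, List.count_cons, List.count_nil]
    intro a; split_ifs <;> omega
  obtain hc | hc : G.phi j fy = G.phi j y ∨ G.phi j fy = G.phi j y + 1 := (by omega) <;>
  obtain hc' | hc' : G.phi j fy' = G.phi j y' ∨ G.phi j fy' = G.phi j y' + 1 := by omega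
  · obtain ⟨t, hyt, hty', -⟩ := hR hc hc'
    exact hPR t hyt hty'
  · obtain ⟨z, -, -, hz, hz', -⟩ := hQ hc hc'
    refine ⟨[j, i, i, i, j, j, i], [i, j, j, i, i, i, j], z, by simp, Multiset.coe_eq_coe.2 ?_,
      rfl, rfl, hz, hz'⟩
    classical
    simp only [List.perm_iff_count, List.count_cons, List.count_nil]
    intro a; split_ifs <;> omega
  · exact absurd ⟨hc, hc'⟩ hnot10
  · obtain ⟨t, hyt, hty', -⟩ := hP hc hc'
    exact hPR t hyt hty'

theorem homConfluentAt_of_B2 (hS2 : axS2 A G) (hS3 : axS3 G) (hS4 : axS4 G) (h6 : axS6 G i j)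
    (hij : i ≠ j) (hAij : A i j = -2) (hAji : A j i = -1)
    (hxi : G.e i x = some xi) (hxj : G.e j x = some xj) : G.HomConfluentAt x i j := by
  have hi := eps_bounds_of_e hS2 hS3 hij hxi
  have hj := eps_bounds_of_e hS2 hS3 hij.symm hxj
  by_cases hi₀ : G.eps j xi = G.eps j x
  · exact homConfluentAt_of_eps_eq hS4 hij hxi hxj hi₀
  by_cases hj₁ : G.eps i xj ≤ G.eps i x + 1
  · exact homConfluentAt_of_eps_le_succ hS3 hS4 hij hxi hxj (by omega) hj₁
  · exact homConfluentAt_of_axS6 hS2 hS3 h6 hij hAji hxi hxj (by omega) (by omega)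

end GoodGraph

theorem stmt_17_general {I X : Type}
    (A : I → I → ℤ) (hrk : Rank2OK A)
    (G : GoodGraph I X) (hreg : ARegular A G) (hextra : ExtraB2 A G) :
    HLC G := by
  obtain ⟨hS2, hS3, hS4, -⟩ := hreg
  intro x i j hij hei hej
  obtain ⟨xi, hxi⟩ := Option.ne_none_iff_exists'.mp hei
  obtain ⟨xj, hxj⟩ := Option.ne_none_iff_exists'.mp hej
  rcases hrk i j hij with ⟨h₁, h₂⟩ | ⟨h₁, h₂⟩ | ⟨h₁, h₂⟩ | ⟨h₁, h₂⟩
  · exact G.homConfluentAt_of_neg_one_le hS2 hS3 hS4 hij (by omega) (by omega) hxi hxj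
  · exact G.homConfluentAt_of_neg_one_le hS2 hS3 hS4 hij (by omega) (by omega) hxi hxj
  · exact G.homConfluentAt_of_B2 hS2 hS3 hS4 (hextra i j h₁ h₂).1 hij h₁ h₂ hxi hxj
  · exact (G.homConfluentAt_of_B2 hS2 hS3 hS4 (hextra j i h₂ h₁).1 hij.symm h₂ h₁ hxj hxi).symm

theorem stmt_17 {I X : Type} [Fintype I] [DecidableEq I]
    (A : I → I → ℤ) (hA : IsGCM A) (hsym : IsSymmetrizable A) (hrk : Rank2OK A)
    (G : GoodGraph I X) (hreg : ARegular A G) (hextra : ExtraB2 A G)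
    (x0 : X) (hmax : IsMaxElem G x0) :
    HLC G :=
  stmt_17_general A hrk G hreg hextra
end
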